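/- Let Z = (Z_1,…,Z_n) be an exchangeable tuple of random variables, let π_1,…,π_K be i.i.d. uniformly random permutations of [n] independent of Z, let Y_k = (Z_{π_k(1)},…,Z_{π_k(n)}) for k ∈ [K], and let Y_0 = (Z_1,…,Z_n). Then the tuple (Y_0, Y_1,…,Y_K) is exchangeable. -/

import Mathlib

open MeasureTheory ProbabilityTheory

/-- Discrete σ-algebra on the (finite) group of permutations. -/
instance permMeasurableSpace {α : Type*} : MeasurableSpace (Equiv.Perm α) := ⊤

/-- The uniform probability measure on the permutations of a finite type. -/
noncomputable def uniformPermMeasure (α : Type*) [Fintype α] [DecidableEq α] :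
    Measure (Equiv.Perm α) :=
  haveI : Nonempty (Equiv.Perm α) := ⟨1⟩
  (PMF.uniformOfFintype (Equiv.Perm α)).toMeasure

/-!
Let `σ` be a uniform permutation independent of everything else.
Exchangeability gives `Z =ᵈ Z ∘ σ`, so `(Y 0, …, Y K)` has the law of
`(Z ∘ σ, Z ∘ σ ∘ π 1, …, Z ∘ σ ∘ π K)`. The tuple `(σ, σ π 1, …, σ π K)` is again i.i.d. uniform,
since `(σ, p) ↦ (σ, σ p)` is a bijection, and the law of `(Z ∘ ρ 0, …, Z ∘ ρ K)` for an i.i.d.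
uniform tuple `ρ` independent of `Z` is invariant under reindexing `ρ`.
-/

namespace MeasureTheory.Measure

theorem map_prod_eq_of_map_slices_eq {α β γ : Type*} [MeasurableSpace α]
    [MeasurableSpace β] [MeasurableSpace γ] (μ : Measure α) (ν : Measure β) [SFinite ν]
    {f g : α × β → γ} (hf : Measurable f) (hg : Measurable g)
    (h : ∀ a, ν.map (fun b => f (a, b)) = ν.map (fun b => g (a, b))) :
    (μ.prod ν).map f = (μ.prod ν).map g := by
  ext s hs
  rw [map_apply hf hs, map_apply hg hs,
    prod_apply (hf hs), prod_apply (hg hs)]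
  refine lintegral_congr fun a => ?_
  change ν ((fun b => f (a, b)) ⁻¹' s) = ν ((fun b => g (a, b)) ⁻¹' s)
  rw [← map_apply (f := fun b => f (a, b)) (hf.comp measurable_prodMk_left) hs,
    ← map_apply (f := fun b => g (a, b)) (hg.comp measurable_prodMk_left) hs, h a]

theorem map_prod_map_left {α α' β γ : Type*} [MeasurableSpace α] [MeasurableSpace α']
    [MeasurableSpace β] [MeasurableSpace γ] (μ : Measure α) (ν : Measure β) [SFinite μ]
    [SFinite ν] {g : α → α'} (hg : Measurable g) {H : α' × β → γ} (hH : Measurable H) :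
    ((μ.map g).prod ν).map H = (μ.prod ν).map fun x => H (g x.1, x.2) := by
  conv_lhs => rw [← map_id (μ := ν), map_prod_map _ _ hg measurable_id]
  exact map_map hH (hg.prodMap measurable_id)

theorem map_equiv_eq_of_singleton_eq {α β : Type*} [MeasurableSpace α]
    [MeasurableSpace β] [DiscreteMeasurableSpace α] [Countable β] [MeasurableSingletonClass β]
    (e : α ≃ β) {μ : Measure α} {ν : Measure β} {c : ENNReal} (hμ : ∀ a, μ {a} = c)
    (hν : ∀ b, ν {b} = c) : μ.map e = ν := by
  refine ext_of_singleton fun b => ?_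
  rw [map_apply .of_discrete (measurableSet_singleton b), ← e.image_symm_eq_preimage,
    Set.image_singleton, hμ, hν]

end MeasureTheory.Measure

instance {α : Type*} : DiscreteMeasurableSpace (Equiv.Perm α) :=
  ⟨fun _ => MeasurableSpace.measurableSet_top⟩

section UniformPerm

variable {ι : Type*} [Fintype ι] [DecidableEq ι]

instance : IsProbabilityMeasure (uniformPermMeasure ι) := by
  unfold uniformPermMeasure
  infer_instance

theorem uniformPermMeasure_singleton (σ : Equiv.Perm ι) :
    uniformPermMeasure ι {σ} = (Fintype.card (Equiv.Perm ι) : ENNReal)⁻¹ := by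
  rw [uniformPermMeasure, PMF.toMeasure_apply_singleton _ _ (measurableSet_singleton _),
    PMF.uniformOfFintype_apply]

theorem pi_uniformPermMeasure_singleton {κ : Type*} [Fintype κ] (q : κ → Equiv.Perm ι) :
    Measure.pi (fun _ : κ => uniformPermMeasure ι) {q}
      = (Fintype.card (Equiv.Perm ι) : ENNReal)⁻¹ ^ Fintype.card κ := by
  rw [← Set.univ_pi_singleton, Measure.pi_pi]
  simp [uniformPermMeasure_singleton, Finset.prod_const]

theorem map_comp_pi_uniformPermMeasure {κ : Type*} [Fintype κ] [DecidableEq κ] (τ : κ ≃ κ) :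
    (Measure.pi fun _ : κ => uniformPermMeasure ι).map (fun q => q ∘ τ)
      = Measure.pi fun _ : κ => uniformPermMeasure ι :=
  Measure.map_equiv_eq_of_singleton_eq (τ.symm.arrowCongr (Equiv.refl _))
    pi_uniformPermMeasure_singleton pi_uniformPermMeasure_singleton

theorem map_cons_mul_uniformPermMeasure (K : ℕ) :
    ((uniformPermMeasure ι).prod (Measure.pi fun _ : Fin K => uniformPermMeasure ι)).map
        (fun x => (Fin.cons x.1 fun j => x.1 * x.2 j : Fin (K + 1) → Equiv.Perm ι))
      = Measure.pi fun _ : Fin (K + 1) => uniformPermMeasure ι := by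
  refine Measure.map_equiv_eq_of_singleton_eq
    ((Equiv.prodShear (Equiv.refl _) fun σ => Equiv.mulLeft (Function.const _ σ)).trans
      (Fin.consEquiv fun _ => _)) (fun x => ?_) pi_uniformPermMeasure_singleton
  rw [← Set.singleton_prod_singleton, Measure.prod_prod, uniformPermMeasure_singleton,
    pi_uniformPermMeasure_singleton, Fintype.card_fin, Fintype.card_fin, pow_succ']

end UniformPerm

section PermuteTuple

variable {κ ι β : Type*} [MeasurableSpace β]

def permuteTuple (x : (κ → Equiv.Perm ι) × (ι → β)) (k : κ) (i : ι) : β :=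
  x.2 (x.1 k i)

theorem measurable_permuteTuple_comp {γ : Type*} [MeasurableSpace γ] [Countable γ]
    [MeasurableSingletonClass γ] (g : γ → κ → Equiv.Perm ι) :
    Measurable fun x : γ × (ι → β) => permuteTuple (g x.1, x.2) :=
  measurable_from_prod_countable_right fun c =>
    measurable_pi_lambda _ fun k => measurable_pi_lambda _ fun i => measurable_pi_apply (g c k i)

theorem measurable_permuteTuple [Finite κ] [Finite ι] :
    Measurable (permuteTuple : (κ → Equiv.Perm ι) × (ι → β) → κ → ι → β) :=
  measurable_permuteTuple_comp id

variable [Fintype κ] [DecidableEq κ] [Fintype ι] [DecidableEq ι]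

theorem map_permuteTuple_reindex (τ : κ ≃ κ) (ν : Measure (ι → β)) [SFinite ν] :
    (((Measure.pi fun _ : κ => uniformPermMeasure ι).prod ν).map permuteTuple).map
        (fun y k => y (τ k))
      = ((Measure.pi fun _ : κ => uniformPermMeasure ι).prod ν).map permuteTuple := by
  rw [Measure.map_map (by fun_prop) measurable_permuteTuple]
  conv_rhs => rw [← map_comp_pi_uniformPermMeasure τ,
    Measure.map_prod_map_left _ _ .of_discrete measurable_permuteTuple]
  rfl

theorem map_permuteTuple_cons_one {K : ℕ} (ν : Measure (ι → β)) [SFinite ν]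
    (hν : ∀ σ : Equiv.Perm ι, ν.map (fun z i => z (σ i)) = ν) :
    ((Measure.pi fun _ : Fin K => uniformPermMeasure ι).prod ν).map
        (fun x => permuteTuple (Fin.cons 1 x.1, x.2))
      = ((Measure.pi fun _ : Fin (K + 1) => uniformPermMeasure ι).prod ν).map permuteTuple := by
  set U := uniformPermMeasure ι
  set P := Measure.pi fun _ : Fin K => U
  have hP : P = (U.prod P).map Prod.snd := by
    rw [Measure.map_snd_prod, measure_univ, one_smul]
  rw [hP, Measure.map_prod_map_left _ _ measurable_snd (measurable_permuteTuple_comp (Fin.cons 1)),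
    ← map_cons_mul_uniformPermMeasure,
    Measure.map_prod_map_left _ _ .of_discrete measurable_permuteTuple]
  refine Measure.map_prod_eq_of_map_slices_eq _ _
    (measurable_permuteTuple_comp fun y : _ × (Fin K → _) => Fin.cons 1 y.2)
    (measurable_permuteTuple_comp fun y : _ × (Fin K → _) => Fin.cons y.1 fun j => y.1 * y.2 j) ?_
  rintro ⟨σ, p⟩
  have hshift : (fun z : ι → β => permuteTuple (Fin.cons 1 p, z)) ∘ (fun z i => z (σ i))
      = fun z => permuteTuple (Fin.cons σ fun j => σ * p j, z) := by
    funext z k i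
    cases k using Fin.cases <;> simp [permuteTuple]
  dsimp only
  conv_lhs => rw [← hν σ, Measure.map_map (g := fun z => permuteTuple (Fin.cons 1 p, z))
    (measurable_permuteTuple.comp measurable_prodMk_left) (by fun_prop), hshift]

end PermuteTuple

theorem randomly_permuted_exchangeable_tuple_is_exchangeable_general
    {Ω : Type*} [MeasurableSpace Ω] (μ : Measure Ω) [IsProbabilityMeasure μ]
    (n K : ℕ) (Z : Ω → Fin n → ℝ) (hZmeas : Measurable Z)
    (hZexch : ∀ σ : Equiv.Perm (Fin n),
      Measure.map (fun ω => fun i => Z ω (σ i)) μ = Measure.map Z μ)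
    (π : Fin K → Ω → Equiv.Perm (Fin n))
    -- the permutations are i.i.d. uniform and (jointly) independent of `Z`:
    (hπ : Measure.map (fun ω => (fun k => π k ω, Z ω)) μ =
      (Measure.pi fun _ : Fin K => uniformPermMeasure (Fin n)).prod (Measure.map Z μ))
    (Y : Fin (K + 1) → Ω → Fin n → ℝ)
    (hY0 : Y 0 = Z)
    (hYk : ∀ k : Fin K, ∀ ω, Y k.succ ω = fun i => Z ω (π k ω i)) :
    ∀ τ : Equiv.Perm (Fin (K + 1)),
      Measure.map (fun ω => fun k => Y (τ k) ω) μ = Measure.map (fun ω => fun k => Y k ω) μ := by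
  intro τ
  have : IsProbabilityMeasure (μ.map Z) := Measure.isProbabilityMeasure_map hZmeas.aemeasurable
  have hν (σ : Equiv.Perm (Fin n)) : (μ.map Z).map (fun z i => z (σ i)) = μ.map Z := by
    rw [Measure.map_map (by fun_prop) hZmeas]
    exact hZexch σ
  have hjoint : AEMeasurable (fun ω => (fun k => π k ω, Z ω)) μ :=
    .of_map_ne_zero (hπ ▸ IsProbabilityMeasure.ne_zero _)
  have hY : (fun ω k => Y k ω)
      = (fun x => permuteTuple (Fin.cons 1 x.1, x.2)) ∘ fun ω => (fun k => π k ω, Z ω) := by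
    funext ω k i
    cases k using Fin.cases with
    | zero => simp [permuteTuple, hY0]
    | succ j => simp [permuteTuple, hYk j ω]
  have hYmeas : AEMeasurable (fun ω k => Y k ω) μ :=
    hY ▸ (measurable_permuteTuple_comp (Fin.cons 1)).comp_aemeasurable hjoint
  have hlaw : μ.map (fun ω k => Y k ω) = ((Measure.pi fun _ : Fin (K + 1) =>
      uniformPermMeasure (Fin n)).prod (μ.map Z)).map permuteTuple := by
    rw [hY, ← AEMeasurable.map_map_of_aemeasurable
      (measurable_permuteTuple_comp (Fin.cons 1)).aemeasurable hjoint, hπ,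
      map_permuteTuple_cons_one _ hν]
  calc μ.map (fun ω k => Y (τ k) ω) = (μ.map fun ω k => Y k ω).map (fun y k => y (τ k)) :=
        (AEMeasurable.map_map_of_aemeasurable
          (measurable_pi_lambda _ fun k => measurable_pi_apply (τ k)).aemeasurable
          hYmeas).symm
    _ = μ.map (fun ω k => Y k ω) := by rw [hlaw, map_permuteTuple_reindex]

/-- If `Z = (Z 1, …, Z n)` is an exchangeable tuple of random variables,
`π 1, …, π K` are i.i.d. uniformly random permutations of `[n]` independent of `Z`,
`Y k = (Z ∘ π k)` for `k ∈ [K]` and `Y 0 = Z`, then `(Y 0, Y 1, …, Y K)` is exchangeable. -/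
theorem randomly_permuted_exchangeable_tuple_is_exchangeable
    {Ω : Type*} [MeasurableSpace Ω] (μ : Measure Ω) [IsProbabilityMeasure μ]
    (n K : ℕ) (Z : Ω → Fin n → ℝ) (hZmeas : Measurable Z)
    (hZexch : ∀ σ : Equiv.Perm (Fin n),
      Measure.map (fun ω => fun i => Z ω (σ i)) μ = Measure.map Z μ)
    (π : Fin K → Ω → Equiv.Perm (Fin n))
    (hπmeas : ∀ k, Measurable (π k))
    -- the permutations are i.i.d. uniform and (jointly) independent of `Z`:
    (hπ : Measure.map (fun ω => (fun k => π k ω, Z ω)) μ =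
      (Measure.pi fun _ : Fin K => uniformPermMeasure (Fin n)).prod (Measure.map Z μ))
    (Y : Fin (K + 1) → Ω → Fin n → ℝ)
    (hY0 : Y 0 = Z)
    (hYk : ∀ k : Fin K, ∀ ω, Y k.succ ω = fun i => Z ω (π k ω i)) :
    ∀ τ : Equiv.Perm (Fin (K + 1)),
      Measure.map (fun ω => fun k => Y (τ k) ω) μ = Measure.map (fun ω => fun k => Y k ω) μ :=
  randomly_permuted_exchangeable_tuple_is_exchangeable_general μ n K Z hZmeas hZexch π hπ Y hY0 hYk
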